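/- For a ring R, the following conditions are equivalent: (1) R is a semiregular ring and J(R) = Z_r(R); (2) R is a right ACS ring which is also a right C₂ ring; (3) every finitely generated right ideal T of R has the form T = eR ⊕ S, where e = e² ∈ R and S is a singular right ideal of R. -/

import Mathlib

namespace CSRickartPaper

section Defs

variable {R : Type*} [Ring R] {M : Type*} [AddCommGroup M] [Module R M]

/-- `N` is an essential submodule of `P` (inside the ambient module `M`):
`N ≤ P` and every submodule of `P` intersecting `N` trivially is zero. -/
def EssentialIn (N P : Submodule R M) : Prop :=
  N ≤ P ∧ ∀ K : Submodule R M, K ≤ P → N ⊓ K = ⊥ → K = ⊥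

/-- `N` is a small (superfluous) submodule of `P`. -/
def SmallIn (N P : Submodule R M) : Prop :=
  N ≤ P ∧ ∀ K : Submodule R M, K ≤ P → N ⊔ K = P → K = P

/-- `N` is a direct summand of `M`. -/
def IsDirectSummand (N : Submodule R M) : Prop :=
  ∃ K : Submodule R M, IsCompl N K

/-- `N` lies above the direct summand `D` of `M`: `M = D ⊕ K`, `D ≤ N` and
`N ⊓ K` is small in `K`. -/
def LiesAbove (N D : Submodule R M) : Prop :=
  ∃ K : Submodule R M, IsCompl D K ∧ D ≤ N ∧ SmallIn (N ⊓ K) K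

/-- `N` lies above a direct summand of `M`. -/
def LiesAboveSummand (N : Submodule R M) : Prop :=
  ∃ D : Submodule R M, LiesAbove N D

end Defs

section ModuleDefs

variable (R : Type*) [Ring R] (M : Type*) [AddCommGroup M] [Module R M]

/-- `M` is a CS-Rickart module: the kernel of every endomorphism is essential
in a direct summand `eM`, `e` an idempotent endomorphism. -/
def IsCSRickart : Prop :=
  ∀ φ : Module.End R M, ∃ e : Module.End R M, IsIdempotentElem e ∧
    EssentialIn (LinearMap.ker φ) (LinearMap.range e)

/-- `M` is a d-CS-Rickart module: the image of every endomorphism lies above a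
direct summand of `M`. -/
def IsDCSRickart : Prop :=
  ∀ φ : Module.End R M, LiesAboveSummand (LinearMap.range φ)

/-- `M` is a Rickart module. -/
def IsRickart : Prop :=
  ∀ φ : Module.End R M, ∃ e : Module.End R M, IsIdempotentElem e ∧
    LinearMap.ker φ = LinearMap.range e

/-- `M` is a dual Rickart module. -/
def IsDRickart : Prop :=
  ∀ φ : Module.End R M, ∃ e : Module.End R M, IsIdempotentElem e ∧
    LinearMap.range φ = LinearMap.range e

/-- `M` is a CS (extending) module. -/
def IsCSModule : Prop :=
  ∀ N : Submodule R M, ∃ D : Submodule R M, IsDirectSummand D ∧ EssentialIn N D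

/-- `M` is a lifting (d-CS) module. -/
def IsLifting : Prop :=
  ∀ N : Submodule R M, LiesAboveSummand N

/-- `M` is a singular module: the annihilator of every element is an essential
ideal of `R`. -/
def IsSingularModule : Prop :=
  ∀ m : M, EssentialIn (LinearMap.ker (LinearMap.toSpanSingleton R M m)) (⊤ : Submodule R R)

/-- `M` is uniform: every nonzero submodule is essential. -/
def IsUniformModule : Prop :=
  ∀ N : Submodule R M, N ≠ ⊥ → EssentialIn N (⊤ : Submodule R M)

/-- `M` satisfies the C₂ condition: every submodule isomorphic to a direct
summand is itself a direct summand. -/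
def IsC2 : Prop :=
  ∀ N D : Submodule R M, IsDirectSummand D → Nonempty (N ≃ₗ[R] D) → IsDirectSummand N

/-- `M` is K-nonsingular. -/
def IsKNonsingular : Prop :=
  ∀ φ : Module.End R M, ∀ N : Submodule R M, EssentialIn N (⊤ : Submodule R M) →
    N ≤ LinearMap.ker φ → φ = 0

/-- `M` is T-noncosingular. -/
def IsTNoncosingular : Prop :=
  ∀ φ : Module.End R M, φ ≠ 0 → ¬ SmallIn (LinearMap.range φ) (⊤ : Submodule R M)

/-- `M` is an SIP-CS module. -/
def IsSIPCS : Prop :=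
  ∀ A B : Submodule R M, IsDirectSummand A → IsDirectSummand B →
    ∃ D : Submodule R M, IsDirectSummand D ∧ EssentialIn (A ⊓ B) D

/-- `M` is an SSP-d-CS module. -/
def IsSSPdCS : Prop :=
  ∀ A B : Submodule R M, IsDirectSummand A → IsDirectSummand B →
    LiesAboveSummand (A ⊔ B)

end ModuleDefs

section RelDefs

variable (R : Type*) [Ring R] (M N : Type*) [AddCommGroup M] [Module R M]
  [AddCommGroup N] [Module R N]

/-- `M` is relatively CS-Rickart to `N`. -/
def IsRelCSRickart : Prop :=
  ∀ φ : M →ₗ[R] N, ∃ e : Module.End R M, IsIdempotentElem e ∧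
    EssentialIn (LinearMap.ker φ) (LinearMap.range e)

/-- `M` is relatively d-CS-Rickart to `N`. -/
def IsRelDCSRickart : Prop :=
  ∀ φ : M →ₗ[R] N, LiesAboveSummand (LinearMap.range φ)

/-- `N` is `M`-injective. -/
def IsRelInjective : Prop :=
  ∀ (A : Submodule R M) (f : A →ₗ[R] N), ∃ g : M →ₗ[R] N, ∀ a : A, g a = f a

end RelDefs

section RingDefs

variable (R : Type*) [Ring R]

/-- The annihilator of an element `a` of `R`, as an ideal (kernel of `r ↦ r • a`). -/
def annElem (a : R) : Submodule R R :=
  LinearMap.ker (LinearMap.toSpanSingleton R R a)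

/-- The annihilator of a subset `X` of `R`. -/
def annSet (X : Set R) : Submodule R R :=
  ⨅ x ∈ X, annElem R x

/-- The principal ideal generated by `e`, i.e. the image of `r ↦ r • e`. -/
def idealGen (e : R) : Submodule R R :=
  LinearMap.range (LinearMap.toSpanSingleton R R e)

/-- `R` is an ACS ring: the annihilator of every element is essential in a
direct summand `eR` of `R`. -/
def IsACSRing : Prop :=
  ∀ a : R, ∃ e : R, IsIdempotentElem e ∧ EssentialIn (annElem R a) (idealGen R e)

/-- `R` is an essentially Baer ring. -/
def IsEssentiallyBaer : Prop :=
  ∀ X : Set R, X.Nonempty → ∃ e : R, IsIdempotentElem e ∧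
    EssentialIn (annSet R X) (idealGen R e)

/-- The Jacobson radical of the ring `R`. -/
noncomputable def jacRad : Ideal R := Ideal.jacobson (⊥ : Ideal R)

/-- `R` is semiregular: `R/J(R)` is von Neumann regular and idempotents lift
modulo `J(R)` (stated elementwise). -/
def IsSemiregularRing : Prop :=
  (∀ a : R, ∃ b : R, a - a * b * a ∈ jacRad R) ∧
  (∀ a : R, a - a * a ∈ jacRad R →
    ∃ e : R, IsIdempotentElem e ∧ e - a ∈ jacRad R)

/-- `J(R)` coincides with the singular ideal `Z(R)`. -/
def JacEqSingular : Prop :=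
  ∀ a : R, a ∈ jacRad R ↔ EssentialIn (annElem R a) (⊤ : Submodule R R)

end RingDefs

section GenDefs

variable {R : Type*} [Ring R] {M : Type*} [AddCommGroup M] [Module R M]

/-- A submodule is `n`-generated if it is spanned by at most `n` elements. -/
def NGen (n : ℕ) (N : Submodule R M) : Prop :=
  ∃ f : Fin n → M, Submodule.span R (Set.range f) = N

end GenDefs

end CSRickartPaper

namespace CSRickartPaper

/-!
Mathlib's modules are left modules, so `idealGen R a` is the left ideal `Ra` and `annElem R a`
the left annihilator `l(a)`; the argument is the mirror image of the paper's.

All three conditions are equivalent to: every `Ra` contains an idempotent `e` with `a(1 - e)`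
singular. Under `J = Z` this is Nicholson's characterisation of semiregular rings (`e = e² ∈ Ra`
with `a(1 - e) ∈ J`), where `e` is a lift of the idempotent `ba + J` conjugated into `Ra` by a
unit of `1 + J`. In an ACS ring with `l(a)` essential in `Re₀`, right multiplication by `a`
embeds `R(1 - e₀)` onto `R(1 - e₀)a`, which by C₂ is a summand `Rf`, and `a(1 - f) = e₀a(1 - f)`
is singular. Conversely `l(a) = l(ae) ∩ l(a(1 - e))` with `ae` regular gives ACS, and C₂ holds
because a singular idempotent vanishes. Finally, if `e` works for a left ideal `T` and `f` for
`a(1 - e)`, then `e + (1 - e)f` works for `T + Ra`; so the condition reaches every finitely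
generated `T`, which then splits as `Re ⊕ (T ∩ l(e))`.
-/

section Essential

variable {R : Type*} [Ring R] {M N : Type*} [AddCommGroup M] [Module R M]
  [AddCommGroup N] [Module R N]

lemma EssentialIn.mono {E F P : Submodule R M} (h : EssentialIn E P) (hEF : E ≤ F)
    (hFP : F ≤ P) : EssentialIn F P :=
  ⟨hFP, fun K hK h0 => h.2 K hK (eq_bot_iff.2 (h0 ▸ inf_le_inf_right K hEF))⟩

lemma EssentialIn.inf {E F P : Submodule R M} (hE : EssentialIn E P) (hF : EssentialIn F P) :
    EssentialIn (E ⊓ F) P :=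
  ⟨inf_le_left.trans hE.1, fun K hK h0 =>
    hF.2 K hK (hE.2 _ (inf_le_right.trans hK) (by rwa [← inf_assoc]))⟩

lemma EssentialIn.inf_left {E : Submodule R M} (hE : EssentialIn E ⊤) (P : Submodule R M) :
    EssentialIn (P ⊓ E) P :=
  ⟨inf_le_left, fun K hK h0 => hE.2 K le_top <| by
    rwa [inf_comm P, inf_assoc, inf_eq_right.2 hK] at h0⟩

lemma EssentialIn.comap {E P : Submodule R N} (hE : EssentialIn E P) (f : M →ₗ[R] N)
    (hf : LinearMap.range f ≤ P) : EssentialIn (E.comap f) ⊤ := by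
  refine ⟨le_top, fun K _ h0 => ?_⟩
  have hmap : E ⊓ K.map f = ⊥ := by
    rw [eq_bot_iff]
    rintro _ ⟨hyE, k, hk, rfl⟩
    have hk0 : k ∈ E.comap f ⊓ K := ⟨hyE, hk⟩
    rw [h0, Submodule.mem_bot] at hk0
    simp [hk0]
  have hK : K.map f = ⊥ := hE.2 _ (LinearMap.map_le_range.trans hf) hmap
  rw [eq_bot_iff, ← h0]
  intro k hk
  have hfk : f k ∈ K.map f := Submodule.mem_map_of_mem hk
  rw [hK, Submodule.mem_bot] at hfk
  exact ⟨by simp [hfk], hk⟩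

end Essential

section Ring

variable {R : Type*} [Ring R]

lemma mem_annElem {a r : R} : r ∈ annElem R a ↔ r * a = 0 := by
  simp [annElem]

lemma mem_idealGen {a x : R} : x ∈ idealGen R a ↔ ∃ r, r * a = x := by
  simp [idealGen]

lemma mul_mem_idealGen (r a : R) : r * a ∈ idealGen R a := mem_idealGen.2 ⟨r, rfl⟩

lemma self_mem_idealGen (a : R) : a ∈ idealGen R a := by
  simpa using mul_mem_idealGen 1 a

lemma idealGen_le {a : R} {T : Submodule R R} (h : a ∈ T) : idealGen R a ≤ T := by
  intro x hx
  obtain ⟨r, rfl⟩ := mem_idealGen.1 hx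
  exact Ideal.mul_mem_left T r h

lemma idealGen_eq_span (a : R) : idealGen R a = R ∙ a :=
  (LinearMap.span_singleton_eq_range R R a).symm

lemma mul_eq_self_of_mem_idealGen {e x : R} (he : IsIdempotentElem e)
    (hx : x ∈ idealGen R e) : x * e = x := by
  obtain ⟨r, rfl⟩ := mem_idealGen.1 hx
  rw [mul_assoc, he.eq]

lemma isCompl_idealGen_annElem {e : R} (he : IsIdempotentElem e) :
    IsCompl (idealGen R e) (annElem R e) :=
  LinearMap.IsIdempotentElem.isCompl (f := LinearMap.toSpanSingleton R R e) <|
    LinearMap.ext fun r => by simp [mul_assoc, he.eq]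

lemma isDirectSummand_idealGen {e : R} (he : IsIdempotentElem e) :
    IsDirectSummand (idealGen R e) :=
  ⟨_, isCompl_idealGen_annElem he⟩

lemma IsDirectSummand.exists_idem {N : Submodule R R} (h : IsDirectSummand N) :
    ∃ e, IsIdempotentElem e ∧ N = idealGen R e := by
  obtain ⟨K, hNK⟩ := h
  obtain ⟨e, he, k, hk, hek⟩ :=
    Submodule.mem_sup.1 (hNK.sup_eq_top ▸ Submodule.mem_top (x := (1 : R)))
  have key : ∀ x ∈ N, x * e = x := by
    intro x hx
    have hsum : x * e + x * k = x := by rw [← mul_add, hek, mul_one]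
    have hxk : x * k = 0 := Submodule.disjoint_def.1 hNK.disjoint _
      (by rw [eq_sub_of_add_eq' hsum]; exact N.sub_mem hx (Ideal.mul_mem_left N x he))
      (Ideal.mul_mem_left K x hk)
    simpa [hxk] using hsum
  exact ⟨e, key e he, le_antisymm (fun x hx => mem_idealGen.2 ⟨x, key x hx⟩) (idealGen_le he)⟩

lemma annElem_eq_idealGen_of_mul_mul_eq_self {x t : R} (h : x * t * x = x) :
    annElem R x = idealGen R (1 - x * t) := by
  ext r
  rw [mem_annElem, mem_idealGen]
  constructor
  · intro hr
    exact ⟨r, by rw [mul_sub, mul_one, ← mul_assoc, hr, zero_mul, sub_zero]⟩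
  · rintro ⟨s, rfl⟩
    rw [mul_assoc, sub_mul, one_mul, h, sub_self, mul_zero]

lemma annElem_mul (x a : R) :
    annElem R (x * a) = (annElem R a).comap (LinearMap.toSpanSingleton R R x) := by
  ext r
  simp [mem_annElem, mul_assoc]

end Ring

section Singular

variable {R : Type*} [Ring R]

/-- `a` lies in the singular ideal `Z(R)`. -/
def IsSingularElem (a : R) : Prop := EssentialIn (annElem R a) ⊤

lemma IsSingularElem.of_annElem_le {a b : R} (ha : IsSingularElem a)
    (h : annElem R a ≤ annElem R b) : IsSingularElem b :=
  EssentialIn.mono ha h le_top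

lemma IsSingularElem.of_essentialIn {a x : R} {P : Submodule R R}
    (h : EssentialIn (annElem R a) P) (hx : x ∈ P) : IsSingularElem (x * a) := by
  rw [IsSingularElem, annElem_mul]
  exact h.comap _ (idealGen_le hx)

lemma IsSingularElem.mul_left {a : R} (h : IsSingularElem a) (x : R) :
    IsSingularElem (x * a) :=
  .of_essentialIn h Submodule.mem_top

lemma IsSingularElem.mul_right {a : R} (h : IsSingularElem a) (x : R) :
    IsSingularElem (a * x) :=
  h.of_annElem_le fun r hr => by
    rw [mem_annElem] at hr ⊢
    rw [← mul_assoc, hr, zero_mul]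

lemma IsSingularElem.add {a b : R} (ha : IsSingularElem a) (hb : IsSingularElem b) :
    IsSingularElem (a + b) :=
  (EssentialIn.inf ha hb).mono (fun r hr => by
    rw [Submodule.mem_inf, mem_annElem, mem_annElem] at hr
    rw [mem_annElem, mul_add, hr.1, hr.2, add_zero]) le_top

lemma isSingularElem_zero : IsSingularElem (0 : R) :=
  ⟨le_top, fun K _ h0 => by
    have h : annElem R (0 : R) = ⊤ := by ext; simp [mem_annElem]
    simpa [h] using h0⟩

lemma IsSingularElem.eq_zero_of_isIdempotentElem {e : R} (h : IsSingularElem e)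
    (he : IsIdempotentElem e) : e = 0 := by
  have hbot := h.2 (idealGen R e) le_top (isCompl_idealGen_annElem he).symm.inf_eq_bot
  simpa [hbot] using self_mem_idealGen e

lemma isSingularModule_iff {S : Submodule R R} :
    IsSingularModule R S ↔ ∀ x ∈ S, IsSingularElem x := by
  have key : ∀ m : S, LinearMap.ker (LinearMap.toSpanSingleton R S m) = annElem R (m : R) := by
    intro m
    ext r
    simp [mem_annElem, ← Submodule.coe_eq_zero]
  simp only [IsSingularModule, IsSingularElem, key, Subtype.forall]

end Singular

section Jacobson

variable {R : Type*} [Ring R]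

instance : (jacRad R).IsTwoSided := by
  unfold jacRad
  infer_instance

lemma mem_jacRad_iff {a : R} : a ∈ jacRad R ↔ ∀ b, ∃ v, v * (1 - b * a) = 1 := by
  simp only [jacRad, Ideal.mem_jacobson_iff, Submodule.mem_bot]
  constructor
  · intro h b
    obtain ⟨v, hv⟩ := h (-b)
    exact ⟨v, by rw [← sub_eq_zero, ← hv]; noncomm_ring⟩
  · intro h y
    obtain ⟨v, hv⟩ := h (-y)
    exact ⟨v, by rw [← hv]; noncomm_ring⟩

lemma isUnit_one_sub_of_mem_jacRad {j : R} (h : j ∈ jacRad R) : IsUnit (1 - j) := by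
  obtain ⟨v, hv⟩ := mem_jacRad_iff.1 h 1
  rw [one_mul] at hv
  obtain ⟨w, hw⟩ := mem_jacRad_iff.1 (neg_mem (Ideal.mul_mem_left _ v h)) 1
  have hv' : 1 - 1 * -(v * j) = v := by
    calc 1 - 1 * -(v * j) = v * (1 - j) + v * j := by rw [hv]; noncomm_ring
      _ = v := by noncomm_ring
  rw [hv'] at hw
  exact isUnit_iff_exists.2 ⟨v, by rw [← left_inv_eq_right_inv hw hv, hw], hv⟩

lemma IsIdempotentElem.eq_zero_of_mem_jacRad {e : R} (he : IsIdempotentElem e)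
    (h : e ∈ jacRad R) : e = 0 :=
  (isUnit_one_sub_of_mem_jacRad h).mul_right_eq_zero.1 he.one_sub_mul_self

end Jacobson

section Semiregular

variable {R : Type*} [Ring R]

lemma IsSemiregularRing.exists_idem (h : IsSemiregularRing R) (a : R) :
    ∃ e, IsIdempotentElem e ∧ e ∈ idealGen R a ∧ a * (1 - e) ∈ jacRad R := by
  obtain ⟨b, hb⟩ := h.1 a
  obtain ⟨f, hf, hfq⟩ := h.2 (b * a) <| by
    rw [show b * a - b * a * (b * a) = b * (a - a * b * a) by noncomm_ring]
    exact Ideal.mul_mem_left _ b hb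
  -- conjugating `f` by the unit `u ∈ 1 + J` moves it into `Ra`, since `f u = f b a`
  obtain ⟨u, hu⟩ := isUnit_one_sub_of_mem_jacRad (Ideal.mul_mem_left _ f hfq)
  have hfu : f * u = f * b * a := by
    rw [hu, show f * (1 - f * (f - b * a)) = f * b * a - (f * f - f) * (1 + f - b * a) by
      noncomm_ring, hf.eq, sub_self, zero_mul, sub_zero]
  have huf : u * f - f * u = f * (f - b * a) * (1 - f) := by
    rw [← sub_eq_zero, hu, show (1 - f * (f - b * a)) * f - f * (1 - f * (f - b * a))
      - f * (f - b * a) * (1 - f) = (f * f - f) * (f - b * a) by noncomm_ring, hf.eq, sub_self,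
      zero_mul]
  refine ⟨↑u⁻¹ * f * u, ?_, mem_idealGen.2 ⟨↑u⁻¹ * f * b, ?_⟩, ?_⟩
  · simp only [IsIdempotentElem, mul_assoc, Units.mul_inv_cancel_left, hf.mul_self_mul]
  · rw [mul_assoc _ f u, hfu]
    noncomm_ring
  · have hconj : a * ↑u⁻¹ * (u * f - f * u) = a * f - a * (↑u⁻¹ * f * u) := by
      simp only [mul_sub, ← mul_assoc, Units.inv_mul_cancel_right]
    have hsplit : a * (1 - ↑u⁻¹ * f * u)
        = (a - a * b * a) + a * -(f - b * a) + a * ↑u⁻¹ * (u * f - f * u) := by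
      rw [hconj]; noncomm_ring
    rw [hsplit, huf]
    refine add_mem (add_mem hb (Ideal.mul_mem_left _ a (neg_mem hfq))) ?_
    exact Ideal.mul_mem_left _ _ (Ideal.mul_mem_right _ _ (Ideal.mul_mem_left _ f hfq))

lemma isSemiregularRing_of_forall_exists_idem
    (h : ∀ a : R, ∃ e, IsIdempotentElem e ∧ e ∈ idealGen R a ∧ a * (1 - e) ∈ jacRad R) :
    IsSemiregularRing R := by
  refine ⟨fun a => ?_, fun a ha => ?_⟩
  · obtain ⟨e, -, hea, hJ⟩ := h a
    obtain ⟨b, rfl⟩ := mem_idealGen.1 hea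
    exact ⟨b, by rwa [mul_sub, mul_one, ← mul_assoc] at hJ⟩
  · obtain ⟨e, he, hea, hJ⟩ := h a
    obtain ⟨b, hb⟩ := mem_idealGen.1 hea
    set n := (1 - e) * a * e
    have hen : e * n = 0 := by
      simp only [n, ← mul_assoc, he.mul_one_sub_self, zero_mul]
    have hne : n * e = n := he.mul_mul_self _
    have hnn : n * n = 0 := by
      rw [show n * n = (1 - e) * a * (e * (1 - e)) * a * e by simp only [n]; noncomm_ring,
        he.mul_one_sub_self, mul_zero, zero_mul, zero_mul]
    refine ⟨e + n, ?_, ?_⟩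
    · rw [IsIdempotentElem, add_mul, mul_add, mul_add, he.eq, hen, hne, hnn]
      abel
    · rw [show e + n - a = -(a * (1 - e)) + b * (a - a * a) + e * (a * (1 - e)) by
        simp only [n, ← hb]; noncomm_ring]
      exact add_mem (add_mem (neg_mem hJ) (Ideal.mul_mem_left _ b ha)) (Ideal.mul_mem_left _ e hJ)

end Semiregular

section SingularOverIdem

variable {R : Type*} [Ring R]

def SingularOverIdem (T : Submodule R R) : Prop :=
  ∃ e, IsIdempotentElem e ∧ e ∈ T ∧ ∀ x ∈ T, IsSingularElem (x * (1 - e))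

lemma singularOverIdem_idealGen_iff {a : R} :
    SingularOverIdem (idealGen R a) ↔
      ∃ e, IsIdempotentElem e ∧ e ∈ idealGen R a ∧ IsSingularElem (a * (1 - e)) := by
  refine ⟨fun ⟨e, he, hea, hs⟩ => ⟨e, he, hea, hs a (self_mem_idealGen a)⟩,
    fun ⟨e, he, hea, hs⟩ => ⟨e, he, hea, fun x hx => ?_⟩⟩
  obtain ⟨r, rfl⟩ := mem_idealGen.1 hx
  rw [mul_assoc]
  exact hs.mul_left r

lemma singularOverIdem_iff_exists_decomp {T : Submodule R R} :
    SingularOverIdem T ↔ ∃ (e : R) (S : Submodule R R), IsIdempotentElem e ∧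
      IsSingularModule R S ∧ idealGen R e ⊓ S = ⊥ ∧ idealGen R e ⊔ S = T := by
  constructor
  · rintro ⟨e, he, heT, hs⟩
    have hc := isCompl_idealGen_annElem he
    refine ⟨e, T ⊓ annElem R e, he, isSingularModule_iff.2 fun x hx => ?_, ?_, ?_⟩
    · have hx1 : x * (1 - e) = x := by
        rw [mul_sub, mul_one, mem_annElem.1 hx.2, sub_zero]
      exact hx1 ▸ hs x hx.1
    · exact eq_bot_iff.2 ((inf_le_inf_left _ inf_le_right).trans hc.inf_eq_bot.le)
    · rw [inf_comm, ← sup_inf_assoc_of_le _ (idealGen_le heT), hc.sup_eq_top, top_inf_eq]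
  · rintro ⟨e, S, he, hS, -, rfl⟩
    refine ⟨e, he, Submodule.mem_sup_left (self_mem_idealGen e), fun x hx => ?_⟩
    obtain ⟨y, hy, s, hs, rfl⟩ := Submodule.mem_sup.1 hx
    rw [add_mul, mul_sub y, mul_one, mul_eq_self_of_mem_idealGen he hy, sub_self, zero_add]
    exact (isSingularModule_iff.1 hS s hs).mul_right _

lemma singularOverIdem_bot : SingularOverIdem (⊥ : Submodule R R) :=
  ⟨0, .zero, zero_mem _, fun x hx => by
    rw [(Submodule.mem_bot R).1 hx, zero_mul]
    exact isSingularElem_zero⟩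

lemma SingularOverIdem.sup_idealGen (hP : ∀ b : R, SingularOverIdem (idealGen R b))
    {T : Submodule R R} (hT : SingularOverIdem T) (a : R) :
    SingularOverIdem (T ⊔ idealGen R a) := by
  obtain ⟨e, he, heT, hsT⟩ := hT
  obtain ⟨f, hf, hfb, hsb⟩ := hP (a * (1 - e))
  have hfe : f * e = 0 := by
    obtain ⟨c, rfl⟩ := mem_idealGen.1 hfb
    rw [mul_assoc, mul_assoc, he.one_sub_mul_self, mul_zero, mul_zero]
  have hg : IsIdempotentElem (e + (1 - e) * f) := by
    refine he.add ?_ ?_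
    · rw [IsIdempotentElem, show (1 - e) * f * ((1 - e) * f) = (1 - e) * (f * f)
        - (1 - e) * (f * e) * f by noncomm_ring, hf.eq, hfe, mul_zero, zero_mul, sub_zero]
    · rw [← mul_assoc, he.mul_one_sub_self, zero_mul, mul_assoc, hfe, mul_zero, add_zero]
  have hbU : a * (1 - e) ∈ T ⊔ idealGen R a := by
    rw [mul_sub, mul_one]
    exact sub_mem (Submodule.mem_sup_right (self_mem_idealGen a))
      (Submodule.mem_sup_left (Ideal.mul_mem_left _ a heT))
  refine ⟨_, hg, add_mem (Submodule.mem_sup_left heT)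
    (Ideal.mul_mem_left _ _ (idealGen_le hbU hfb)), fun x hx => ?_⟩
  obtain ⟨t, ht, y, hy, rfl⟩ := Submodule.mem_sup.1 hx
  obtain ⟨r, rfl⟩ := mem_idealGen.1 hy
  rw [show (t + r * a) * (1 - (e + (1 - e) * f))
    = t * (1 - e) * (1 - f) + r * (a * (1 - e)) * (1 - f) by noncomm_ring]
  exact ((hsT t ht).mul_right _).add (hsb _ (mul_mem_idealGen r _))

lemma singularOverIdem_of_fg (hP : ∀ a : R, SingularOverIdem (idealGen R a))
    {T : Submodule R R} (hT : T.FG) : SingularOverIdem T := by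
  induction T, hT using Submodule.fg_sup_span_induction with
  | bot => exact singularOverIdem_bot
  | sup T x _ ih => simpa [idealGen_eq_span] using ih.sup_idealGen hP x

lemma forall_fg_exists_decomp_iff :
    (∀ T : Submodule R R, T.FG → ∃ (e : R) (S : Submodule R R),
        IsIdempotentElem e ∧ IsSingularModule R S ∧
        idealGen R e ⊓ S = ⊥ ∧ idealGen R e ⊔ S = T) ↔
      ∀ a : R, SingularOverIdem (idealGen R a) :=
  ⟨fun h a => singularOverIdem_iff_exists_decomp.2 (h _ (idealGen_eq_span a ▸
      Submodule.fg_span_singleton a)),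
    fun h _ hT => singularOverIdem_iff_exists_decomp.1 (singularOverIdem_of_fg h hT)⟩

end SingularOverIdem

section ACSC2

variable {R : Type*} [Ring R]

lemma IsC2.isDirectSummand_idealGen_mul (hC2 : IsC2 R R) {d a : R} (hd : IsIdempotentElem d)
    (hinj : ∀ x ∈ idealGen R d, x * a = 0 → x = 0) :
    IsDirectSummand (idealGen R (d * a)) := by
  let ρ := (LinearMap.toSpanSingleton R R a).domRestrict (idealGen R d)
  have hρ : Function.Injective ρ :=
    (injective_iff_map_eq_zero ρ).2 fun x hx => Subtype.ext (hinj x x.2 hx)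
  have hrange : LinearMap.range ρ = idealGen R (d * a) := by
    ext x
    simp only [ρ, LinearMap.range_domRestrict, Submodule.mem_map, mem_idealGen,
      LinearMap.toSpanSingleton_apply, smul_eq_mul]
    constructor
    · rintro ⟨_, ⟨r, rfl⟩, rfl⟩
      exact ⟨r, (mul_assoc r d a).symm⟩
    · rintro ⟨r, rfl⟩
      exact ⟨r * d, ⟨r, rfl⟩, mul_assoc r d a⟩
  exact hC2 _ _ (isDirectSummand_idealGen hd)
    ⟨(LinearEquiv.ofEq _ _ hrange.symm).trans (LinearEquiv.ofInjective ρ hρ).symm⟩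

lemma exists_idem_of_isACSRing_of_isC2 (hACS : IsACSRing R) (hC2 : IsC2 R R) (a : R) :
    ∃ f, IsIdempotentElem f ∧ f ∈ idealGen R a ∧ IsSingularElem (a * (1 - f)) := by
  obtain ⟨e, he, hess⟩ := hACS a
  have hinj : ∀ x ∈ idealGen R (1 - e), x * a = 0 → x = 0 := fun x hx hxa => by
    have hxe : x * e = x := mul_eq_self_of_mem_idealGen he (hess.1 (mem_annElem.2 hxa))
    calc x = x * (1 - e) := (mul_eq_self_of_mem_idealGen he.one_sub hx).symm
      _ = 0 := by rw [mul_sub, mul_one, hxe, sub_self]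
  obtain ⟨f, hf, hfeq⟩ := (hC2.isDirectSummand_idealGen_mul he.one_sub hinj).exists_idem
  have hfa : f ∈ idealGen R a :=
    idealGen_le (mul_mem_idealGen _ a) (hfeq ▸ self_mem_idealGen f)
  have h0 : (1 - e) * a * (1 - f) = 0 := by
    rw [mul_sub, mul_one, mul_eq_self_of_mem_idealGen hf (hfeq ▸ self_mem_idealGen _), sub_self]
  have hsplit : a * (1 - f) = e * a * (1 - f) := by
    calc a * (1 - f) = e * a * (1 - f) + (1 - e) * a * (1 - f) := by noncomm_ring
      _ = e * a * (1 - f) := by rw [h0, add_zero]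
  refine ⟨f, hf, hfa, ?_⟩
  rw [hsplit]
  exact (IsSingularElem.of_essentialIn hess (self_mem_idealGen e)).mul_right _

lemma isACSRing_of_forall_singularOverIdem (h : ∀ a : R, SingularOverIdem (idealGen R a)) :
    IsACSRing R := by
  intro a
  obtain ⟨e, he, hea, hs⟩ := singularOverIdem_idealGen_iff.1 (h a)
  obtain ⟨c, hc⟩ := mem_idealGen.1 hea
  have hreg : a * e * c * (a * e) = a * e := by
    rw [show a * e * c * (a * e) = a * e * (c * a) * e by noncomm_ring, hc]
    simp only [mul_assoc, he.eq]
  have hann : annElem R a = annElem R (a * e) ⊓ annElem R (a * (1 - e)) := by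
    ext r
    simp only [Submodule.mem_inf, mem_annElem, ← mul_assoc]
    constructor
    · intro hr
      simp [hr]
    · rintro ⟨h1, h2⟩
      rwa [mul_sub, mul_one, h1, sub_zero] at h2
  have hidem : IsIdempotentElem (a * e * c) := by
    rw [IsIdempotentElem, ← mul_assoc, hreg]
  refine ⟨1 - a * e * c, hidem.one_sub, ?_⟩
  rw [← annElem_eq_idealGen_of_mul_mul_eq_self hreg, hann]
  exact hs.inf_left _

lemma exists_idealGen_of_linearEquiv {d : R} (hd : IsIdempotentElem d) {N : Submodule R R}
    (χ : N ≃ₗ[R] idealGen R d) :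
    ∃ a, N = idealGen R a ∧ d * a = a ∧ ∀ x ∈ idealGen R d, x * a = 0 → x = 0 := by
  let φ : idealGen R d →ₗ[R] R := N.subtype ∘ₗ χ.symm.toLinearMap
  have hφ : Function.Injective φ := Subtype.val_injective.comp χ.symm.injective
  set a := φ ⟨d, self_mem_idealGen d⟩
  have hφa : ∀ x : idealGen R d, φ x = x * a := by
    intro x
    have hx : x = (x : R) • (⟨d, self_mem_idealGen d⟩ : idealGen R d) :=
      Subtype.ext (mul_eq_self_of_mem_idealGen hd x.2).symm
    conv_lhs => rw [hx]
    rw [map_smul, smul_eq_mul]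
  refine ⟨a, ?_, (hφa ⟨d, self_mem_idealGen d⟩).symm, fun x hx hxa => ?_⟩
  · ext n
    rw [mem_idealGen]
    constructor
    · intro hn
      refine ⟨χ ⟨n, hn⟩, ?_⟩
      rw [← hφa]
      simp [φ]
    · rintro ⟨r, rfl⟩
      rw [← smul_eq_mul, ← map_smul]
      exact (χ.symm _).2
  · have h0 : φ ⟨x, hx⟩ = φ 0 := by rw [hφa, map_zero]; exact hxa
    simpa using hφ h0

lemma mul_one_sub_eq_zero_of_isSingularElem {a d e : R} (hd : IsIdempotentElem d)
    (hda : d * a = a) (hinj : ∀ x ∈ idealGen R d, x * a = 0 → x = 0) (he : IsIdempotentElem e)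
    (hea : e ∈ idealGen R a) (hs : IsSingularElem (a * (1 - e))) : a * (1 - e) = 0 := by
  obtain ⟨c, hc⟩ := mem_idealGen.1 hea
  have hca : e * c * a = e := by rw [mul_assoc, hc, he.eq]
  -- `x = (1 - p) d ∈ Rd` is an idempotent with `x a = a (1 - e)`, hence singular, hence zero
  set p := a * (e * c)
  have hp : IsIdempotentElem p := by
    rw [IsIdempotentElem, show p * p = a * (e * c * a) * (e * c) by simp only [p]; noncomm_ring,
      hca]
    simp only [p, mul_assoc, he.mul_self_mul]
  have hdp : d * p = p := by rw [← mul_assoc, hda]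
  set x := (1 - p) * d
  have hxa : x * a = a * (1 - e) := by
    simp only [x, p]
    rw [mul_assoc, hda, sub_mul, one_mul, mul_assoc a, hca, mul_sub, mul_one]
  have hx : IsIdempotentElem x := by
    rw [IsIdempotentElem, show x * x = (1 - p) * (d * d) - (1 - p) * (d * p) * d by
      simp only [x]; noncomm_ring, hd.eq, hdp, hp.one_sub_mul_self, zero_mul, sub_zero]
  have hxs : IsSingularElem x := hs.of_annElem_le fun r hr => by
    rw [mem_annElem] at hr ⊢
    exact hinj _ (Ideal.mul_mem_left _ r (mul_mem_idealGen _ d)) (by rw [mul_assoc, hxa, hr])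
  rw [← hxa, hxs.eq_zero_of_isIdempotentElem hx, zero_mul]

lemma isC2_of_forall_singularOverIdem (h : ∀ a : R, SingularOverIdem (idealGen R a)) :
    IsC2 R R := by
  rintro N D hD ⟨χ⟩
  obtain ⟨d, hd, rfl⟩ := hD.exists_idem
  obtain ⟨a, rfl, hda, hinj⟩ := exists_idealGen_of_linearEquiv hd χ
  obtain ⟨e, he, hea, hs⟩ := singularOverIdem_idealGen_iff.1 (h a)
  have hae : a * e = a := by
    have h0 := mul_one_sub_eq_zero_of_isSingularElem hd hda hinj he hea hs
    rwa [mul_sub, mul_one, sub_eq_zero, eq_comm] at h0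
  rw [le_antisymm (idealGen_le (hae ▸ mul_mem_idealGen a e)) (idealGen_le hea)]
  exact isDirectSummand_idealGen he

theorem isACSRing_and_isC2_iff :
    IsACSRing R ∧ IsC2 R R ↔ ∀ a : R, SingularOverIdem (idealGen R a) :=
  ⟨fun ⟨hACS, hC2⟩ a =>
      singularOverIdem_idealGen_iff.2 (exists_idem_of_isACSRing_of_isC2 hACS hC2 a),
    fun h => ⟨isACSRing_of_forall_singularOverIdem h, isC2_of_forall_singularOverIdem h⟩⟩

end ACSC2

section SemiregularSingular

variable {R : Type*} [Ring R]

lemma jacEqSingular_of_forall_singularOverIdem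
    (h : ∀ a : R, SingularOverIdem (idealGen R a)) : JacEqSingular R := by
  intro a
  constructor
  · intro ha
    obtain ⟨e, he, hea, hs⟩ := singularOverIdem_idealGen_iff.1 (h a)
    have he0 : e = 0 := IsIdempotentElem.eq_zero_of_mem_jacRad he (idealGen_le ha hea)
    rw [he0, sub_zero, mul_one] at hs
    exact hs
  · intro ha
    refine mem_jacRad_iff.2 fun b => ?_
    obtain ⟨e, he, heu, hs⟩ := singularOverIdem_idealGen_iff.1 (h (1 - b * a))
    have h1e : IsSingularElem (1 - e) := by
      rw [show 1 - e = (1 - b * a) * (1 - e) + b * a * (1 - e) by noncomm_ring]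
      exact hs.add ((IsSingularElem.mul_left ha b).mul_right _)
    obtain ⟨v, hv⟩ := mem_idealGen.1 heu
    refine ⟨v, ?_⟩
    rw [hv]
    exact (sub_eq_zero.1 (h1e.eq_zero_of_isIdempotentElem he.one_sub)).symm

theorem isSemiregularRing_and_jacEqSingular_iff :
    IsSemiregularRing R ∧ JacEqSingular R ↔ ∀ a : R, SingularOverIdem (idealGen R a) := by
  refine ⟨fun ⟨hsr, hJZ⟩ a => ?_, fun h => ⟨?_, jacEqSingular_of_forall_singularOverIdem h⟩⟩
  · obtain ⟨e, he, hea, hJ⟩ := hsr.exists_idem a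
    exact singularOverIdem_idealGen_iff.2 ⟨e, he, hea, (hJZ _).1 hJ⟩
  · have hJZ := jacEqSingular_of_forall_singularOverIdem h
    refine isSemiregularRing_of_forall_exists_idem fun a => ?_
    obtain ⟨e, he, hea, hs⟩ := singularOverIdem_idealGen_iff.1 (h a)
    exact ⟨e, he, hea, (hJZ _).2 hs⟩

end SemiregularSingular

/-- `R` is semiregular with `J(R) = Z(R)` iff `R` is an ACS ring satisfying C₂
iff every finitely generated ideal decomposes as `eR ⊕ S` with `e` idempotent
and `S` a singular ideal. -/
theorem semiregular_iff_acs_c2_iff_fg_decomposes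
    {R : Type*} [Ring R] :
    ((IsSemiregularRing R ∧ JacEqSingular R) ↔ (IsACSRing R ∧ IsC2 R R)) ∧
    ((IsACSRing R ∧ IsC2 R R) ↔
      (∀ T : Submodule R R, T.FG → ∃ (e : R) (S : Submodule R R),
        IsIdempotentElem e ∧ IsSingularModule R S ∧
        idealGen R e ⊓ S = ⊥ ∧ idealGen R e ⊔ S = T)) :=
  ⟨isSemiregularRing_and_jacEqSingular_iff.trans isACSRing_and_isC2_iff.symm,
    isACSRing_and_isC2_iff.trans forall_fg_exists_decomp_iff.symm⟩

end CSRickartPaper
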